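/- Validity of the φ-expansion for βx+α mod 1. Let 0 ≤ α < 1 < β and k := ⌈α+β⌉, A := {0,…,k−1}. Then: (i) for every x ∈ [0,1]∖S, limₙ φ̄ₙ^{α,β}(i(x)) = x (the φ-expansion is valid); (ii) {i(x) : x ∈ [0,1]∖S} = {x ∈ A^ℕ : u^{α,β} ≺ σⁿx ≺ v^{α,β} for all n ≥ 0}; (iii) u^{α,β} ≼ σⁿu^{α,β} ≺ v^{α,β} and u^{α,β} ≺ σⁿv^{α,β} ≼ v^{α,β} for all n ≥ 0. -/

import Mathlib

open Filter Set

/-- The shift map on one-sided sequences. -/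
def shft (x : ℕ → ℕ) : ℕ → ℕ := fun n => x (n + 1)

/-- Strict lexicographic order on one-sided sequences:
`x ≺ y` iff they differ and `x m < y m` at the first index `m` where they differ. -/
def lexLt (x y : ℕ → ℕ) : Prop := ∃ m, (∀ i, i < m → x i = y i) ∧ x m < y m

/-- Lexicographic order `x ≼ y` on one-sided sequences. -/
def lexLe (x y : ℕ → ℕ) : Prop := x = y ∨ lexLt x y

/-- The map `φ̄^{α,β} : ℝ → [0,1]`:  `0` for `t ≤ α`, `(t-α)/β` for `α ≤ t ≤ α+β`,
`1` for `t ≥ α+β`. -/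
noncomputable def phiB (α β t : ℝ) : ℝ :=
  if t ≤ α then 0 else if α + β ≤ t then 1 else (t - α) / β

/-- `φ̄ₙ^{α,β}(x) = φ̄^{α,β}(x₀ + φ̄^{α,β}(x₁ + ⋯ + φ̄^{α,β}(x_{n-1})⋯))`. -/
noncomputable def phiBN (α β : ℝ) : ℕ → (ℕ → ℕ) → ℝ
  | 0, _ => 0
  | n + 1, x => phiB α β (x 0 + phiBN α β n (shft x))

/-- `φ̄_∞^{α,β}(x) = limₙ φ̄ₙ^{α,β}(x)`; the sequence `φ̄ₙ^{α,β}(x)` is nondecreasing in `n`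
and bounded, so its limit is its supremum. -/
noncomputable def phiBInf (α β : ℝ) (x : ℕ → ℕ) : ℝ := ⨆ n, phiBN α β n x

/-- `T̂_{α,β}(x) = βx + α − ⌊βx + α⌋`. -/
noncomputable def Tlow (α β x : ℝ) : ℝ := β * x + α - ⌊β * x + α⌋

/-- `Ť_{α,β}(x) = βx + α + 1 − ⌈βx + α⌉`. -/
noncomputable def Thigh (α β x : ℝ) : ℝ := β * x + α + 1 - ⌈β * x + α⌉

/-- `k = ⌈α + β⌉`, the size of the alphabet `A = {0, …, k-1}`. -/
noncomputable def kAB (α β : ℝ) : ℕ := (⌈α + β⌉).toNat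

/-- The string `u^{α,β}`, the coding of the orbit of `0`:
`u^{α,β}ₙ = ⌊β T̂ⁿ_{α,β}(0) + α⌋`. -/
noncomputable def uItin (α β : ℝ) : ℕ → ℕ := fun n => (⌊β * (Tlow α β)^[n] 0 + α⌋).toNat

/-- The string `v^{α,β}`, the coding of the orbit of `1`:
`v^{α,β}ₙ = ⌈β Ťⁿ_{α,β}(1) + α⌉ − 1`. -/
noncomputable def vItin (α β : ℝ) : ℕ → ℕ := fun n => (⌈β * (Thigh α β)^[n] 1 + α⌉ - 1).toNat

/-- The shift space `Σ(u,v) = {x ∈ A^ℕ : u ≼ σⁿx ≼ v for all n ≥ 0}`, `A = {0,…,k-1}`. -/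
def SigSet (k : ℕ) (u v : ℕ → ℕ) : Set (ℕ → ℕ) :=
  {x | (∀ i, x i < k) ∧ ∀ n, lexLe u (shft^[n] x) ∧ lexLe (shft^[n] x) v}

/-- The number of words of length `n` in the language of `Σ(u,v)` (prefixes of elements). -/
noncomputable def nWords (k : ℕ) (u v : ℕ → ℕ) (n : ℕ) : ℕ :=
  Nat.card {w : Fin n → ℕ // ∃ x ∈ SigSet k u v, ∀ i : Fin n, x i.1 = w i}

/-- The topological entropy (base 2) of `Σ(u,v)`:
`h = limₙ (1/n) log₂ card(Lₙ)` (the limit exists by subadditivity, so it equals the limsup;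
it is `0` when `Σ(u,v) = ∅`). -/
noncomputable def entS (k : ℕ) (u v : ℕ → ℕ) : ℝ :=
  Filter.limsup (fun n : ℕ => Real.logb 2 (nWords k u v n) / (n : ℝ)) Filter.atTop

/-- Concatenation of the word `w₀ ⋯ w_{p-1}` (the first `p` letters of `w`) with the
string `y`. -/
def wcat (p : ℕ) (w y : ℕ → ℕ) : ℕ → ℕ := fun n => if n < p then w n else y (n - p)

/-- The partition points for the system `βx + α mod 1`:
`a 0 = 0`, `a k = 1`, `a j = (j − α)/β` for `j = 1, …, k−1`. -/
noncomputable def ptAB (α β : ℝ) (j : ℕ) : ℝ :=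
  if j = 0 then 0 else if j = kAB α β then 1 else ((j : ℝ) - α) / β

/-- The branch interval `I j = (a j, a (j+1))`. -/
noncomputable def IAB (α β : ℝ) (j : ℕ) : Set ℝ := Set.Ioo (ptAB α β j) (ptAB α β (j + 1))

open Classical in
/-- The transformation `T x = βx + α − j` for `x ∈ I j` (junk value `0` elsewhere). -/
noncomputable def TAB (α β : ℝ) (x : ℝ) : ℝ :=
  if h : ∃ j, j < kAB α β ∧ x ∈ IAB α β j then β * x + α - (h.choose : ℝ) else 0

/-- `S₀ = {a 0, a 1, …, a k}`. -/
def S0AB (α β : ℝ) : Set ℝ := {y | ∃ j, j ≤ kAB α β ∧ y = ptAB α β j}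

/-- The singular set `S` for `βx + α mod 1`. -/
def SAB (α β : ℝ) : Set ℝ :=
  {x ∈ Set.Icc (0 : ℝ) 1 |
    ∃ m, (TAB α β)^[m] x ∈ S0AB α β ∧ ∀ i, i < m → (TAB α β)^[i] x ∉ S0AB α β}

open Classical in
/-- The coding map: `(codeAB α β x) n = j` iff `Tⁿ x ∈ I j`. -/
noncomputable def codeAB (α β : ℝ) (x : ℝ) : ℕ → ℕ := fun n =>
  if h : ∃ j, j < kAB α β ∧ (TAB α β)^[n] x ∈ IAB α β j then h.choose else 0

/-!
A point `x ∈ [0,1] ∖ S` never meets a partition point, so its orbit stays in the open branches;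
there `T`, `T̂` and `Ť` agree, and `i(x)` is both the `T̂`- and the `Ť`-itinerary of `x`. Undoing
`n` steps of `T` gives `x = φ̄(i₀(x) + ⋯ φ̄(i_{n-1}(x) + Tⁿx)⋯)`, and as `φ̄` is `1/β`-Lipschitz,
`φ̄ₙ(i(x))` is within `β⁻ⁿ` of `x`.

Two orbits of `T̂` or `Ť` whose itineraries share `m` digits are `βᵐ` times further apart than
their starting points, so itineraries are monotone in the lexicographic order; this gives (iii) and
the inclusion `⊆` in (ii). Conversely, for an admissible string `y` the numbers
`sₙ = φ̄_∞(σⁿy)` satisfy `sₙ = φ̄(yₙ + sₙ₊₁)`, the comparison with `u` and `v` keeps them in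
`(0,1)`, hence `sₙ` lies in the open branch `yₙ` and `T sₙ = sₙ₊₁`: `y` is the code of `s₀`.
-/

open Topology

lemma shft_iterate_apply (n : ℕ) (y : ℕ → ℕ) (i : ℕ) : shft^[n] y i = y (i + n) := by
  induction n generalizing y with
  | zero => rfl
  | succ n ih => rw [Function.iterate_succ_apply, ih]; rfl

section PhiB

variable {α β : ℝ}

lemma phiB_eq_clamp (hβ : 0 < β) (t : ℝ) : phiB α β t = max (min ((t - α) / β) 1) 0 := by
  unfold phiB
  split_ifs with h₁ h₂
  · rw [max_eq_right ((min_le_left _ _).trans (div_nonpos_iff.2 (Or.inr ⟨by linarith, hβ.le⟩)))]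
  · rw [min_eq_right ((one_le_div hβ).2 (by linarith)), max_eq_left zero_le_one]
  · rw [min_eq_left ((div_le_one hβ).2 (by linarith)), max_eq_left (div_nonneg (by linarith) hβ.le)]

lemma continuous_phiB (hβ : 0 < β) : Continuous (phiB α β) := by
  rw [funext (phiB_eq_clamp hβ)]
  fun_prop

lemma monotone_phiB (hβ : 0 < β) : Monotone (phiB α β) := fun s t hst => by
  rw [phiB_eq_clamp hβ, phiB_eq_clamp hβ]
  gcongr

lemma phiB_mem_Icc (hβ : 0 < β) (t : ℝ) : phiB α β t ∈ Icc 0 1 := by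
  rw [phiB_eq_clamp hβ]
  exact ⟨le_max_right _ _, max_le (min_le_right _ _) zero_le_one⟩

lemma dist_phiB_le (hβ : 0 < β) (s t : ℝ) : dist (phiB α β s) (phiB α β t) ≤ dist s t / β := by
  rw [phiB_eq_clamp hβ, phiB_eq_clamp hβ, Real.dist_eq, Real.dist_eq]
  calc _ ≤ |min ((s - α) / β) 1 - min ((t - α) / β) 1| := abs_max_sub_max_le_abs _ _ _
    _ ≤ |(s - α) / β - (t - α) / β| := by
      simpa using abs_min_sub_min_le_max ((s - α) / β) 1 ((t - α) / β) 1
    _ = |s - t| / β := by rw [← sub_div, abs_div, abs_of_pos hβ, sub_sub_sub_cancel_right]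

lemma lt_phiB_iff (hβ : 0 < β) {w t : ℝ} (hw : w ∈ Ico 0 1) :
    w < phiB α β t ↔ β * w + α < t := by
  obtain ⟨hw₀, hw₁⟩ := hw
  unfold phiB
  split_ifs with h₁ h₂
  · exact iff_of_false hw₀.not_gt (by nlinarith)
  · exact iff_of_true hw₁ (by nlinarith)
  · rw [lt_div_iff₀ hβ]
    constructor <;> intro <;> linarith

lemma phiB_lt_iff (hβ : 0 < β) {w t : ℝ} (hw : w ∈ Ioc 0 1) :
    phiB α β t < w ↔ t < β * w + α := by
  obtain ⟨hw₀, hw₁⟩ := hw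
  unfold phiB
  split_ifs with h₁ h₂
  · exact iff_of_true hw₀ (by nlinarith)
  · exact iff_of_false hw₁.not_gt (by nlinarith)
  · rw [div_lt_iff₀ hβ]
    constructor <;> intro <;> linarith

lemma phiB_eq_iff (hβ : 0 < β) {w t : ℝ} (hw : w ∈ Ioo 0 1) :
    phiB α β t = w ↔ t = β * w + α := by
  rw [le_antisymm_iff, le_antisymm_iff, ← not_lt, ← not_lt, ← not_lt, ← not_lt,
    lt_phiB_iff hβ ⟨hw.1.le, hw.2⟩, phiB_lt_iff hβ ⟨hw.1, hw.2.le⟩, and_comm]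

end PhiB

/-- `φ̄ₙ` with the innermost `0` replaced by `t`. -/
noncomputable def phiBComp (α β : ℝ) : ℕ → (ℕ → ℕ) → ℝ → ℝ
  | 0, _, t => t
  | n + 1, y, t => phiB α β (y 0 + phiBComp α β n (shft y) t)

section PhiBComp

variable {α β : ℝ}

lemma phiBN_eq_phiBComp (n : ℕ) (y : ℕ → ℕ) : phiBN α β n y = phiBComp α β n y 0 := by
  induction n generalizing y with
  | zero => rfl
  | succ n ih => simp only [phiBN, phiBComp, ih]

lemma phiBComp_add (m n : ℕ) (y : ℕ → ℕ) (t : ℝ) :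
    phiBComp α β (m + n) y t = phiBComp α β m y (phiBComp α β n (shft^[m] y) t) := by
  induction m generalizing y with
  | zero => simp [phiBComp]
  | succ m ih => rw [Nat.succ_add, phiBComp, ih, phiBComp, Function.iterate_succ_apply]

lemma phiBComp_congr {n : ℕ} {y z : ℕ → ℕ} (h : ∀ i < n, y i = z i) (t : ℝ) :
    phiBComp α β n y t = phiBComp α β n z t := by
  induction n generalizing y z with
  | zero => rfl
  | succ n ih =>
    rw [phiBComp, phiBComp, h 0 n.succ_pos,
      ih (y := shft y) (z := shft z) fun i hi => h (i + 1) (by omega)]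

lemma continuous_phiBComp (hβ : 0 < β) (n : ℕ) (y : ℕ → ℕ) : Continuous (phiBComp α β n y) := by
  induction n generalizing y with
  | zero => exact continuous_id
  | succ n ih => exact (continuous_phiB hβ).comp (continuous_const.add (ih _))

lemma dist_phiBComp_le (hβ : 0 < β) (n : ℕ) (y : ℕ → ℕ) (s t : ℝ) :
    dist (phiBComp α β n y s) (phiBComp α β n y t) ≤ dist s t / β ^ n := by
  induction n generalizing y with
  | zero => simp [phiBComp]
  | succ n ih =>
    calc _ ≤ dist (phiBComp α β n (shft y) s) (phiBComp α β n (shft y) t) / β :=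
          (dist_phiB_le hβ _ _).trans_eq (by rw [dist_add_left])
      _ ≤ dist s t / β ^ n / β := by gcongr; exact ih _
      _ = dist s t / β ^ (n + 1) := by rw [div_div, pow_succ]

end PhiBComp

section PhiBInf

variable {α β : ℝ}

lemma phiBN_mem_Icc (hβ : 0 < β) (n : ℕ) (y : ℕ → ℕ) : phiBN α β n y ∈ Icc 0 1 := by
  cases n with
  | zero => exact ⟨le_rfl, zero_le_one⟩
  | succ n => exact phiB_mem_Icc hβ _

lemma monotone_phiBN (hβ : 0 < β) (y : ℕ → ℕ) : Monotone fun n => phiBN α β n y := by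
  refine monotone_nat_of_le_succ fun n => ?_
  induction n generalizing y with
  | zero => exact (phiBN_mem_Icc hβ 1 y).1
  | succ n ih => exact monotone_phiB hβ ((add_le_add_iff_left _).2 (ih _))

lemma tendsto_phiBN (hβ : 0 < β) (y : ℕ → ℕ) :
    Tendsto (fun n => phiBN α β n y) atTop (𝓝 (phiBInf α β y)) :=
  tendsto_atTop_ciSup (monotone_phiBN hβ y)
    ⟨1, by rintro _ ⟨n, rfl⟩; exact (phiBN_mem_Icc hβ n y).2⟩

lemma phiBInf_mem_Icc (hβ : 0 < β) (y : ℕ → ℕ) : phiBInf α β y ∈ Icc 0 1 :=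
  isClosed_Icc.mem_of_tendsto (tendsto_phiBN hβ y) (Eventually.of_forall (phiBN_mem_Icc hβ · y))

lemma phiBInf_eq_phiBComp (hβ : 0 < β) (m : ℕ) (y : ℕ → ℕ) :
    phiBInf α β y = phiBComp α β m y (phiBInf α β (shft^[m] y)) := by
  have hlim := ((continuous_phiBComp (α := α) hβ m y).tendsto _).comp
    (tendsto_phiBN (α := α) hβ (shft^[m] y))
  refine tendsto_nhds_unique ((tendsto_add_atTop_iff_nat m).2 (tendsto_phiBN hβ y)) ?_
  convert hlim using 2 with n
  rw [Function.comp_apply, phiBN_eq_phiBComp, phiBN_eq_phiBComp, add_comm, phiBComp_add]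

lemma phiBInf_shft_iterate (hβ : 0 < β) (n : ℕ) (y : ℕ → ℕ) :
    phiBInf α β (shft^[n] y) = phiB α β (y n + phiBInf α β (shft^[n + 1] y)) := by
  rw [phiBInf_eq_phiBComp hβ 1]
  show phiB α β (shft^[n] y 0 + phiBInf α β (shft (shft^[n] y))) = _
  rw [shft_iterate_apply, zero_add, ← Function.iterate_succ_apply' shft]

end PhiBInf

noncomputable def lowerItin (α β z : ℝ) : ℕ → ℕ := fun n => (⌊β * (Tlow α β)^[n] z + α⌋).toNat

noncomputable def upperItin (α β z : ℝ) : ℕ → ℕ := fun n => (⌈β * (Thigh α β)^[n] z + α⌉ - 1).toNat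

section Itineraries

variable {α β : ℝ}

lemma uItin_eq_lowerItin : uItin α β = lowerItin α β 0 := rfl

lemma vItin_eq_upperItin : vItin α β = upperItin α β 1 := rfl

lemma shft_iterate_lowerItin (m : ℕ) (z : ℝ) :
    shft^[m] (lowerItin α β z) = lowerItin α β ((Tlow α β)^[m] z) := by
  funext n
  rw [shft_iterate_apply, lowerItin, lowerItin, Function.iterate_add_apply]

lemma shft_iterate_upperItin (m : ℕ) (z : ℝ) :
    shft^[m] (upperItin α β z) = upperItin α β ((Thigh α β)^[m] z) := by
  funext n
  rw [shft_iterate_apply, upperItin, upperItin, Function.iterate_add_apply]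

lemma Tlow_mem_Ico (z : ℝ) : Tlow α β z ∈ Ico 0 1 :=
  ⟨Int.fract_nonneg _, Int.fract_lt_one _⟩

lemma Thigh_mem_Ioc (z : ℝ) : Thigh α β z ∈ Ioc 0 1 := by
  have h₁ := Int.ceil_lt_add_one (β * z + α)
  have h₂ := Int.le_ceil (β * z + α)
  exact ⟨by unfold Thigh; linarith, by unfold Thigh; linarith⟩

lemma Tlow_iterate_mem_Ico {z : ℝ} (hz : z ∈ Ico 0 1) (n : ℕ) : (Tlow α β)^[n] z ∈ Ico 0 1 := by
  cases n with
  | zero => exact hz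
  | succ n => rw [Function.iterate_succ_apply']; exact Tlow_mem_Ico _

lemma Thigh_iterate_mem_Ioc {z : ℝ} (hz : z ∈ Ioc 0 1) (n : ℕ) :
    (Thigh α β)^[n] z ∈ Ioc 0 1 := by
  cases n with
  | zero => exact hz
  | succ n => rw [Function.iterate_succ_apply']; exact Thigh_mem_Ioc _

variable (hα : 0 ≤ α) (hβ : 0 < β)
include hα hβ

lemma lowerItin_cast {z : ℝ} (hz : z ∈ Ico 0 1) (n : ℕ) :
    (lowerItin α β z n : ℝ) = ⌊β * (Tlow α β)^[n] z + α⌋ := by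
  have := (Tlow_iterate_mem_Ico (α := α) (β := β) hz n).1
  exact_mod_cast Int.toNat_of_nonneg (Int.floor_nonneg.2 (by positivity))

lemma upperItin_cast {z : ℝ} (hz : z ∈ Ioc 0 1) (n : ℕ) :
    (upperItin α β z n : ℝ) = ⌈β * (Thigh α β)^[n] z + α⌉ - 1 := by
  have := (Thigh_iterate_mem_Ioc (α := α) (β := β) hz n).1
  have : 0 < ⌈β * (Thigh α β)^[n] z + α⌉ := Int.ceil_pos.2 (by positivity)
  exact_mod_cast Int.toNat_of_nonneg (by omega)

lemma Tlow_iterate_succ {z : ℝ} (hz : z ∈ Ico 0 1) (n : ℕ) :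
    (Tlow α β)^[n + 1] z = β * (Tlow α β)^[n] z + α - lowerItin α β z n := by
  rw [lowerItin_cast hα hβ hz, Function.iterate_succ_apply']
  rfl

lemma Thigh_iterate_succ {z : ℝ} (hz : z ∈ Ioc 0 1) (n : ℕ) :
    (Thigh α β)^[n + 1] z = β * (Thigh α β)^[n] z + α - upperItin α β z n := by
  rw [upperItin_cast hα hβ hz, Function.iterate_succ_apply', Thigh]
  ring

end Itineraries

section Lex

lemma lexLt_of_ne {a b : ℕ → ℕ} (hne : a ≠ b)
    (h : ∀ m, (∀ i < m, a i = b i) → a m ≤ b m) : lexLt a b := by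
  have hex : ∃ m, a m ≠ b m := Function.ne_iff.1 hne
  have hpre : ∀ i < Nat.find hex, a i = b i := fun i hi => not_not.1 (Nat.find_min hex hi)
  exact ⟨Nat.find hex, hpre, (h _ hpre).lt_of_ne (Nat.find_spec hex)⟩

lemma lexLe_of_forall {a b : ℕ → ℕ} (h : ∀ m, (∀ i < m, a i = b i) → a m ≤ b m) :
    lexLe a b :=
  (eq_or_ne a b).imp id fun hne => lexLt_of_ne hne h

lemma sub_eq_pow_mul_of_digits_eq {α β : ℝ} {p q : ℕ → ℝ} {a b : ℕ → ℕ}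
    (hp : ∀ n, p (n + 1) = β * p n + α - a n) (hq : ∀ n, q (n + 1) = β * q n + α - b n)
    {m : ℕ} (h : ∀ i < m, a i = b i) : q m - p m = β ^ m * (q 0 - p 0) := by
  induction m with
  | zero => simp
  | succ m ih =>
    rw [hp, hq, h m m.lt_succ_self, pow_succ, mul_right_comm, ← ih fun i hi => h i (by omega)]
    ring

variable {α β : ℝ} (hα : 0 ≤ α)
include hα

lemma lowerItin_lexLt_upperItin (hβ : 1 < β) {y z : ℝ} (hy : y ∈ Ico 0 1) (hz : z ∈ Ioc 0 1)
    (hyz : y < z) : lexLt (lowerItin α β y) (upperItin α β z) := by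
  have hβ₀ : 0 < β := one_pos.trans hβ
  have hdrift := fun m => sub_eq_pow_mul_of_digits_eq (m := m)
    (p := fun n => (Tlow α β)^[n] y) (q := fun n => (Thigh α β)^[n] z)
    (Tlow_iterate_succ hα hβ₀ hy) (Thigh_iterate_succ hα hβ₀ hz)
  refine lexLt_of_ne (fun heq => ?_) fun m hm => ?_
  · obtain ⟨n, hn⟩ := pow_unbounded_of_one_lt (z - y)⁻¹ hβ
    have h := hdrift n fun i _ => congrFun heq i
    have hlow := (Tlow_iterate_mem_Ico (α := α) (β := β) hy n).1
    have hhigh := (Thigh_iterate_mem_Ioc (α := α) (β := β) hz n).2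
    rw [inv_lt_iff_one_lt_mul₀ (sub_pos.2 hyz)] at hn
    simp only [Function.iterate_zero_apply] at h
    nlinarith
  · have h := hdrift m hm
    simp only [Function.iterate_zero_apply] at h
    have hlt : (Tlow α β)^[m] y < (Thigh α β)^[m] z := by
      nlinarith [pow_pos hβ₀ m]
    have : ⌊β * (Tlow α β)^[m] y + α⌋ < ⌈β * (Thigh α β)^[m] z + α⌉ :=
      Int.floor_lt_ceil_of_lt (by gcongr)
    exact Int.toNat_le_toNat (by omega)

lemma lowerItin_lexLe (hβ : 0 < β) {y z : ℝ} (hy : y ∈ Ico 0 1) (hz : z ∈ Ico 0 1)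
    (hyz : y ≤ z) : lexLe (lowerItin α β y) (lowerItin α β z) := by
  refine lexLe_of_forall fun m hm => Int.toNat_le_toNat (Int.floor_le_floor ?_)
  have h := sub_eq_pow_mul_of_digits_eq (p := fun n => (Tlow α β)^[n] y)
    (q := fun n => (Tlow α β)^[n] z) (Tlow_iterate_succ hα hβ hy) (Tlow_iterate_succ hα hβ hz) hm
  simp only [Function.iterate_zero_apply] at h
  have : (Tlow α β)^[m] y ≤ (Tlow α β)^[m] z := by nlinarith [pow_pos hβ m]
  gcongr

lemma upperItin_lexLe (hβ : 0 < β) {y z : ℝ} (hy : y ∈ Ioc 0 1) (hz : z ∈ Ioc 0 1)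
    (hyz : y ≤ z) : lexLe (upperItin α β y) (upperItin α β z) := by
  refine lexLe_of_forall fun m hm =>
    Int.toNat_le_toNat (Int.sub_le_sub_right (Int.ceil_le_ceil ?_) 1)
  have h := sub_eq_pow_mul_of_digits_eq (p := fun n => (Thigh α β)^[n] y)
    (q := fun n => (Thigh α β)^[n] z) (Thigh_iterate_succ hα hβ hy) (Thigh_iterate_succ hα hβ hz) hm
  simp only [Function.iterate_zero_apply] at h
  have : (Thigh α β)^[m] y ≤ (Thigh α β)^[m] z := by nlinarith [pow_pos hβ m]
  gcongr

end Lex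

/-- For `s ∈ (0,1)` this is `s ∈ IAB α β j` (`mem_IAB_iff`), stated without the case
distinctions of `ptAB`. -/
def InBranch (α β : ℝ) (j : ℕ) (s : ℝ) : Prop :=
  s ∈ Ioo 0 1 ∧ (j : ℝ) < β * s + α ∧ β * s + α < j + 1

namespace InBranch

variable {α β : ℝ} {j : ℕ} {s : ℝ}

lemma floor_eq (h : InBranch α β j s) : ⌊β * s + α⌋ = j :=
  Int.floor_eq_iff.2 ⟨by exact_mod_cast h.2.1.le, by exact_mod_cast h.2.2⟩

lemma ceil_eq (h : InBranch α β j s) : ⌈β * s + α⌉ = j + 1 :=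
  Int.ceil_eq_iff.2 ⟨by push_cast; linarith [h.2.1], by exact_mod_cast h.2.2.le⟩

lemma Tlow_eq (h : InBranch α β j s) : Tlow α β s = β * s + α - j := by
  rw [Tlow, h.floor_eq, Int.cast_natCast]

lemma Thigh_eq (h : InBranch α β j s) : Thigh α β s = β * s + α - j := by
  rw [Thigh, h.ceil_eq]
  push_cast
  ring

lemma not_mem_S0AB (hβ : 0 < β) (h : InBranch α β j s) : s ∉ S0AB α β := by
  rintro ⟨i, hik, rfl⟩
  have hs := h.1
  unfold ptAB at h hs
  split_ifs at h hs with hi₀ hik'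
  · exact hs.1.false
  · exact hs.2.false
  · obtain ⟨-, h₁, h₂⟩ := h
    have hi : β * ((i - α) / β) + α = i := by field_simp; ring
    rw [hi] at h₁ h₂
    have : j < i := by exact_mod_cast h₁
    have : i < j + 1 := by exact_mod_cast h₂
    omega

end InBranch

section Partition

variable {α β : ℝ} (hα : 0 ≤ α) (hβ : 0 < β)
include hα hβ

lemma add_le_kAB : α + β ≤ kAB α β := by
  have h : (0 : ℤ) ≤ ⌈α + β⌉ := Int.ceil_nonneg (by positivity)
  rw [kAB, show ((⌈α + β⌉.toNat : ℕ) : ℝ) = (⌈α + β⌉ : ℝ) by exact_mod_cast Int.toNat_of_nonneg h]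
  exact Int.le_ceil _

lemma mem_IAB_iff {j : ℕ} {s : ℝ} (hs : s ∈ Ioo 0 1) (hj : j < kAB α β) :
    s ∈ IAB α β j ↔ (j : ℝ) < β * s + α ∧ β * s + α < j + 1 := by
  have hk := add_le_kAB hα hβ
  have hs₀ : 0 < β * s := mul_pos hβ hs.1
  have hs₁ : β * s < β := mul_lt_of_lt_one_right hβ hs.2
  have hlow : ptAB α β j < s ↔ (j : ℝ) < β * s + α := by
    rcases eq_or_ne j 0 with rfl | hj₀
    · simp only [ptAB, if_true, Nat.cast_zero, hs.1, true_iff]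
      linarith
    · rw [ptAB, if_neg hj₀, if_neg hj.ne, div_lt_iff₀ hβ]
      constructor <;> intro <;> linarith
  have hhigh : s < ptAB α β (j + 1) ↔ β * s + α < j + 1 := by
    rw [ptAB, if_neg j.succ_ne_zero]
    split_ifs with hjk
    · have : ((j + 1 : ℕ) : ℝ) = kAB α β := by rw [hjk]
      push_cast at this
      exact iff_of_true hs.2 (by linarith)
    · rw [lt_div_iff₀ hβ]
      push_cast
      constructor <;> intro <;> linarith
  exact and_congr hlow hhigh

namespace InBranch

variable {j : ℕ} {s : ℝ} (h : InBranch α β j s)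
include h

lemma lt_kAB : j < kAB α β := by
  have := add_le_kAB hα hβ
  have := mul_lt_of_lt_one_right hβ h.1.2
  exact_mod_cast h.2.1.trans (by linarith : β * s + α < kAB α β)

lemma mem_IAB : s ∈ IAB α β j :=
  (mem_IAB_iff hα hβ h.1 (h.lt_kAB hα hβ)).2 h.2

lemma eq_of_mem_IAB {j' : ℕ} (hj' : j' < kAB α β) (hs : s ∈ IAB α β j') : j' = j := by
  obtain ⟨h₁, h₂⟩ := (mem_IAB_iff hα hβ h.1 hj').1 hs
  have : (j' : ℝ) < j + 1 := h₁.trans h.2.2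
  have : (j : ℝ) < j' + 1 := h.2.1.trans h₂
  have : j' < j + 1 := by exact_mod_cast ‹(j' : ℝ) < j + 1›
  have : j < j' + 1 := by exact_mod_cast ‹(j : ℝ) < j' + 1›
  omega

lemma TAB_eq : TAB α β s = β * s + α - j := by
  have hex : ∃ j', j' < kAB α β ∧ s ∈ IAB α β j' := ⟨j, h.lt_kAB hα hβ, h.mem_IAB hα hβ⟩
  rw [TAB, dif_pos hex, h.eq_of_mem_IAB hα hβ hex.choose_spec.1 hex.choose_spec.2]

lemma TAB_mem_Icc : TAB α β s ∈ Icc 0 1 := by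
  rw [h.TAB_eq hα hβ]
  constructor <;> linarith [h.2.1, h.2.2]

end InBranch

lemma codeAB_eq_of_inBranch {j n : ℕ} {x : ℝ} (h : InBranch α β j ((TAB α β)^[n] x)) :
    codeAB α β x n = j := by
  have hex : ∃ j', j' < kAB α β ∧ (TAB α β)^[n] x ∈ IAB α β j' :=
    ⟨j, h.lt_kAB hα hβ, h.mem_IAB hα hβ⟩
  rw [codeAB, dif_pos hex]
  exact h.eq_of_mem_IAB hα hβ hex.choose_spec.1 hex.choose_spec.2

lemma exists_inBranch {s : ℝ} (hs : s ∈ Icc 0 1) (hS₀ : s ∉ S0AB α β) : ∃ j, InBranch α β j s := by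
  have hk := add_le_kAB hα hβ
  have hs₀ : s ≠ 0 := fun h => hS₀ ⟨0, Nat.zero_le _, by rw [h, ptAB, if_pos rfl]⟩
  have hs₁ : s ≠ 1 := fun h => hS₀ ⟨kAB α β, le_rfl, by
    rw [h, ptAB, if_neg (by have := hk; intro h0; rw [h0] at this; push_cast at this; linarith),
      if_pos rfl]⟩
  have hsIoo : s ∈ Ioo 0 1 := ⟨hs.1.lt_of_ne' hs₀, hs.2.lt_of_ne hs₁⟩
  have hpos : 0 < β * s + α := by have := mul_pos hβ hsIoo.1; linarith
  have hltk : β * s + α < kAB α β := by have := mul_lt_of_lt_one_right hβ hsIoo.2; linarith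
  refine ⟨⌊β * s + α⌋.toNat, hsIoo, ?_⟩
  have hcast : ((⌊β * s + α⌋.toNat : ℕ) : ℝ) = ⌊β * s + α⌋ := by
    exact_mod_cast Int.toNat_of_nonneg (Int.floor_nonneg.2 hpos.le)
  rw [hcast]
  refine ⟨(Int.floor_le _).lt_of_ne fun hint => hS₀ ?_, Int.lt_floor_add_one _⟩
  set i := ⌊β * s + α⌋.toNat
  have hi₀ : i ≠ 0 := by
    intro h0; rw [← hcast, h0, Nat.cast_zero] at hint; linarith
  have hik : i < kAB α β := by
    have : (i : ℝ) < kAB α β := by rw [hcast, hint]; exact hltk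
    exact_mod_cast this
  refine ⟨i, hik.le, ?_⟩
  rw [ptAB, if_neg hi₀, if_neg hik.ne, hcast, hint]
  field_simp
  ring

end Partition

lemma not_mem_SAB_iff {α β x : ℝ} (hx : x ∈ Icc 0 1) :
    x ∉ SAB α β ↔ ∀ m, (TAB α β)^[m] x ∉ S0AB α β := by
  classical
  refine ⟨fun hS m hm => ?_, fun h hS => h _ hS.2.choose_spec.1⟩
  have hex : ∃ m, (TAB α β)^[m] x ∈ S0AB α β := ⟨m, hm⟩
  exact hS ⟨hx, Nat.find hex, Nat.find_spec hex, fun i hi => Nat.find_min hex hi⟩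

lemma shft_iterate_codeAB {α β : ℝ} (m : ℕ) (x : ℝ) :
    shft^[m] (codeAB α β x) = codeAB α β ((TAB α β)^[m] x) := by
  funext n
  rw [shft_iterate_apply]
  unfold codeAB
  rw [Function.iterate_add_apply]

def RegularOrbit (α β x : ℝ) : Prop := ∀ n, ∃ j, InBranch α β j ((TAB α β)^[n] x)

lemma RegularOrbit.iterate {α β x : ℝ} (h : RegularOrbit α β x) (m : ℕ) :
    RegularOrbit α β ((TAB α β)^[m] x) := fun n => by
  rw [← Function.iterate_add_apply]
  exact h (n + m)

section RegularOrbit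

variable {α β x : ℝ} (hα : 0 ≤ α) (hβ : 0 < β)
include hα hβ

lemma regularOrbit_of_mem (hx : x ∈ Icc 0 1 \ SAB α β) : RegularOrbit α β x := by
  have hS₀ := (not_mem_SAB_iff hx.1).1 hx.2
  suffices h : ∀ n, (TAB α β)^[n] x ∈ Icc 0 1 from fun n => exists_inBranch hα hβ (h n) (hS₀ n)
  intro n
  induction n with
  | zero => exact hx.1
  | succ n ih =>
    obtain ⟨j, hj⟩ := exists_inBranch hα hβ ih (hS₀ n)
    rw [Function.iterate_succ_apply']
    exact hj.TAB_mem_Icc hα hβ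

namespace RegularOrbit

variable (h : RegularOrbit α β x)
include h

lemma codeAB_lt_kAB (n : ℕ) : codeAB α β x n < kAB α β := by
  obtain ⟨j, hj⟩ := h n
  rw [codeAB_eq_of_inBranch hα hβ hj]
  exact hj.lt_kAB hα hβ

lemma TAB_iterate_eq_Tlow_iterate (n : ℕ) : (TAB α β)^[n] x = (Tlow α β)^[n] x := by
  induction n with
  | zero => rfl
  | succ n ih =>
    obtain ⟨j, hj⟩ := h n
    rw [Function.iterate_succ_apply', Function.iterate_succ_apply', ← ih, hj.Tlow_eq,
      hj.TAB_eq hα hβ]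

lemma TAB_iterate_eq_Thigh_iterate (n : ℕ) : (TAB α β)^[n] x = (Thigh α β)^[n] x := by
  induction n with
  | zero => rfl
  | succ n ih =>
    obtain ⟨j, hj⟩ := h n
    rw [Function.iterate_succ_apply', Function.iterate_succ_apply', ← ih, hj.Thigh_eq,
      hj.TAB_eq hα hβ]

lemma codeAB_eq_lowerItin : codeAB α β x = lowerItin α β x := by
  funext n
  obtain ⟨j, hj⟩ := h n
  rw [codeAB_eq_of_inBranch hα hβ hj, lowerItin, ← h.TAB_iterate_eq_Tlow_iterate hα hβ n,
    hj.floor_eq, Int.toNat_natCast]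

lemma codeAB_eq_upperItin : codeAB α β x = upperItin α β x := by
  funext n
  obtain ⟨j, hj⟩ := h n
  rw [codeAB_eq_of_inBranch hα hβ hj, upperItin, ← h.TAB_iterate_eq_Thigh_iterate hα hβ n,
    hj.ceil_eq, add_sub_cancel_right, Int.toNat_natCast]

lemma eq_phiBComp (n : ℕ) : x = phiBComp α β n (codeAB α β x) ((TAB α β)^[n] x) := by
  induction n generalizing x with
  | zero => rfl
  | succ n ih =>
    obtain ⟨j, hj⟩ := h 0
    have hshft : shft (codeAB α β x) = codeAB α β (TAB α β x) := shft_iterate_codeAB 1 x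
    have hT : RegularOrbit α β (TAB α β x) := h.iterate 1
    rw [phiBComp, hshft, Function.iterate_succ_apply, ← ih hT,
      codeAB_eq_of_inBranch hα hβ hj]
    rw [Function.iterate_zero_apply] at hj
    refine ((phiB_eq_iff hβ hj.1).2 ?_).symm
    rw [hj.TAB_eq hα hβ]
    ring

end RegularOrbit

end RegularOrbit

namespace RegularOrbit

variable {α β x : ℝ} (hα : 0 ≤ α) (hβ : 1 < β) (h : RegularOrbit α β x)
include hα hβ h

lemma tendsto_phiBN : Tendsto (fun n => phiBN α β n (codeAB α β x)) atTop (𝓝 x) := by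
  have hβ₀ : 0 < β := one_pos.trans hβ
  have hdist : ∀ n, dist (phiBN α β n (codeAB α β x)) x ≤ (β⁻¹) ^ n := fun n => by
    obtain ⟨j, hj⟩ := h n
    calc dist (phiBN α β n (codeAB α β x)) x
        = dist (phiBComp α β n (codeAB α β x) 0)
            (phiBComp α β n (codeAB α β x) ((TAB α β)^[n] x)) := by
          rw [phiBN_eq_phiBComp, ← h.eq_phiBComp hα hβ₀ n]
      _ ≤ dist 0 ((TAB α β)^[n] x) / β ^ n := dist_phiBComp_le hβ₀ _ _ _ _
      _ ≤ 1 / β ^ n := by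
          gcongr
          rw [dist_comm, Real.dist_eq, sub_zero, abs_of_pos hj.1.1]
          exact hj.1.2.le
      _ = (β⁻¹) ^ n := by rw [inv_pow, one_div]
  exact tendsto_iff_dist_tendsto_zero.2 (squeeze_zero (fun _ => dist_nonneg) hdist
    (tendsto_pow_atTop_nhds_zero_of_lt_one (inv_nonneg.2 hβ₀.le) (inv_lt_one_of_one_lt₀ hβ)))

lemma lexLt_uItin_vItin (n : ℕ) :
    lexLt (uItin α β) (shft^[n] (codeAB α β x)) ∧ lexLt (shft^[n] (codeAB α β x)) (vItin α β) := by
  have hβ₀ : 0 < β := one_pos.trans hβ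
  obtain ⟨j, hj⟩ := h n
  obtain ⟨hs₀, hs₁⟩ := hj.1
  rw [shft_iterate_codeAB]
  constructor
  · rw [(h.iterate n).codeAB_eq_upperItin hα hβ₀, uItin_eq_lowerItin]
    exact lowerItin_lexLt_upperItin hα hβ ⟨le_rfl, one_pos⟩ ⟨hs₀, hs₁.le⟩ hs₀
  · rw [(h.iterate n).codeAB_eq_lowerItin hα hβ₀, vItin_eq_upperItin]
    exact lowerItin_lexLt_upperItin hα hβ ⟨hs₀.le, hs₁⟩ ⟨one_pos, le_rfl⟩ hs₁

end RegularOrbit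

section Realization

variable {α β : ℝ} (hα : 0 ≤ α) (hβ : 0 < β)
include hα hβ

lemma lt_phiBComp_lowerItin {z : ℝ} (hz : z ∈ Ico 0 1) (m : ℕ) {t : ℝ}
    (ht : (Tlow α β)^[m] z < t) : z < phiBComp α β m (lowerItin α β z) t := by
  induction m generalizing z with
  | zero => exact ht
  | succ m ih =>
    have hdigit := Tlow_iterate_succ hα hβ hz 0
    have htail := ih (Tlow_mem_Ico z) (by rwa [← Function.iterate_succ_apply])
    simp only [zero_add, Function.iterate_one, Function.iterate_zero_apply] at hdigit
    rw [phiBComp, ← Function.iterate_one shft, shft_iterate_lowerItin, Function.iterate_one,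
      lt_phiB_iff hβ hz]
    linarith

lemma phiBComp_upperItin_lt {z : ℝ} (hz : z ∈ Ioc 0 1) (m : ℕ) {t : ℝ}
    (ht : t < (Thigh α β)^[m] z) : phiBComp α β m (upperItin α β z) t < z := by
  induction m generalizing z with
  | zero => exact ht
  | succ m ih =>
    have hdigit := Thigh_iterate_succ hα hβ hz 0
    have htail := ih (Thigh_mem_Ioc z) (by rwa [← Function.iterate_succ_apply])
    simp only [zero_add, Function.iterate_one, Function.iterate_zero_apply] at hdigit
    rw [phiBComp, ← Function.iterate_one shft, shft_iterate_upperItin, Function.iterate_one,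
      phiB_lt_iff hβ hz]
    linarith

lemma phiBInf_pos_of_lexLt {y : ℕ → ℕ} (h : lexLt (uItin α β) y) : 0 < phiBInf α β y := by
  obtain ⟨m, hpre, hm⟩ := h
  have h0 : (0 : ℝ) ∈ Ico 0 1 := ⟨le_rfl, one_pos⟩
  have hw := Tlow_iterate_mem_Ico (α := α) (β := β) h0 m
  have hdigit : ((uItin α β m + 1 : ℕ) : ℝ) ≤ y m := by exact_mod_cast hm
  push_cast at hdigit
  have htail : (Tlow α β)^[m] 0 < phiBInf α β (shft^[m] y) := by
    rw [phiBInf_shft_iterate hβ]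
    calc (Tlow α β)^[m] 0 < phiB α β (uItin α β m + 1) := by
          rw [lt_phiB_iff hβ hw, uItin_eq_lowerItin, lowerItin_cast hα hβ h0]
          exact Int.lt_floor_add_one _
      _ ≤ _ := monotone_phiB hβ (by linarith [(phiBInf_mem_Icc (α := α) hβ (shft^[m + 1] y)).1])
  rw [phiBInf_eq_phiBComp hβ m, ← phiBComp_congr hpre]
  exact lt_phiBComp_lowerItin hα hβ h0 m htail

lemma phiBInf_lt_one_of_lexLt {y : ℕ → ℕ} (h : lexLt y (vItin α β)) : phiBInf α β y < 1 := by
  obtain ⟨m, hpre, hm⟩ := h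
  have h1 : (1 : ℝ) ∈ Ioc 0 1 := ⟨one_pos, le_rfl⟩
  have hw := Thigh_iterate_mem_Ioc (α := α) (β := β) h1 m
  have hdigit : ((y m + 1 : ℕ) : ℝ) ≤ vItin α β m := by exact_mod_cast hm
  push_cast at hdigit
  have htail : phiBInf α β (shft^[m] y) < (Thigh α β)^[m] 1 := by
    rw [phiBInf_shft_iterate hβ]
    calc _ ≤ phiB α β (vItin α β m) :=
          monotone_phiB hβ (by linarith [(phiBInf_mem_Icc (α := α) hβ (shft^[m + 1] y)).2])
      _ < (Thigh α β)^[m] 1 := by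
          rw [phiB_lt_iff hβ hw, vItin_eq_upperItin, upperItin_cast hα hβ h1]
          linarith [Int.ceil_lt_add_one (β * (Thigh α β)^[m] 1 + α)]
  rw [phiBInf_eq_phiBComp hβ m, phiBComp_congr hpre]
  exact phiBComp_upperItin_lt hα hβ h1 m htail

lemma exists_codeAB_eq {y : ℕ → ℕ} (hu : ∀ n, lexLt (uItin α β) (shft^[n] y))
    (hv : ∀ n, lexLt (shft^[n] y) (vItin α β)) :
    ∃ x ∈ Icc 0 1 \ SAB α β, y = codeAB α β x := by
  set s : ℕ → ℝ := fun n => phiBInf α β (shft^[n] y)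
  have hs : ∀ n, s n ∈ Ioo 0 1 := fun n =>
    ⟨phiBInf_pos_of_lexLt hα hβ (hu n), phiBInf_lt_one_of_lexLt hα hβ (hv n)⟩
  have hbranch : ∀ n, InBranch α β (y n) (s n) ∧ TAB α β (s n) = s (n + 1) := fun n => by
    have heq : (y n : ℝ) + s (n + 1) = β * s n + α :=
      (phiB_eq_iff hβ (hs n)).1 (phiBInf_shft_iterate hβ n y).symm
    have hb : InBranch α β (y n) (s n) :=
      ⟨hs n, by linarith [(hs (n + 1)).1], by linarith [(hs (n + 1)).2]⟩
    exact ⟨hb, by rw [hb.TAB_eq hα hβ]; linarith⟩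
  have horbit : ∀ n, (TAB α β)^[n] (s 0) = s n := fun n => by
    induction n with
    | zero => rfl
    | succ n ih => rw [Function.iterate_succ_apply', ih, (hbranch n).2]
  have hs₀ : s 0 ∈ Icc 0 1 := Ioo_subset_Icc_self (hs 0)
  refine ⟨s 0, ⟨hs₀, (not_mem_SAB_iff hs₀).2 fun m => ?_⟩, funext fun n => ?_⟩
  · rw [horbit]
    exact (hbranch m).1.not_mem_S0AB hβ
  · rw [codeAB_eq_of_inBranch hα hβ (j := y n) (by rw [horbit]; exact (hbranch n).1)]

end Realization

theorem beta_alpha_mod_one_valid_general (α β : ℝ) (hα0 : 0 ≤ α) (hβ : 1 < β) :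
    (∀ x ∈ Set.Icc (0 : ℝ) 1 \ SAB α β,
      Filter.Tendsto (fun n => phiBN α β n (codeAB α β x)) Filter.atTop (nhds x)) ∧
    ({y : ℕ → ℕ | ∃ x ∈ Set.Icc (0 : ℝ) 1 \ SAB α β, y = codeAB α β x} =
      {x : ℕ → ℕ | (∀ i, x i < kAB α β) ∧
        ∀ n, lexLt (uItin α β) (shft^[n] x) ∧ lexLt (shft^[n] x) (vItin α β)}) ∧
    (∀ n, lexLe (uItin α β) (shft^[n] (uItin α β)) ∧
          lexLt (shft^[n] (uItin α β)) (vItin α β) ∧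
          lexLt (uItin α β) (shft^[n] (vItin α β)) ∧
          lexLe (shft^[n] (vItin α β)) (vItin α β)) := by
  have hβ₀ : 0 < β := one_pos.trans hβ
  refine ⟨fun x hx => (regularOrbit_of_mem hα0 hβ₀ hx).tendsto_phiBN hα0 hβ, ?_, fun n => ?_⟩
  · ext y
    constructor
    · rintro ⟨x, hx, rfl⟩
      have h := regularOrbit_of_mem hα0 hβ₀ hx
      exact ⟨h.codeAB_lt_kAB hα0 hβ₀, h.lexLt_uItin_vItin hα0 hβ⟩
    · rintro ⟨-, hy⟩
      exact exists_codeAB_eq hα0 hβ₀ (fun n => (hy n).1) (fun n => (hy n).2)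
  · have h0 : (0 : ℝ) ∈ Ico 0 1 := ⟨le_rfl, one_pos⟩
    have h1 : (1 : ℝ) ∈ Ioc 0 1 := ⟨one_pos, le_rfl⟩
    have hu := Tlow_iterate_mem_Ico (α := α) (β := β) h0 n
    have hv := Thigh_iterate_mem_Ioc (α := α) (β := β) h1 n
    rw [uItin_eq_lowerItin, vItin_eq_upperItin, shft_iterate_lowerItin, shft_iterate_upperItin]
    exact ⟨lowerItin_lexLe hα0 hβ₀ h0 hu hu.1, lowerItin_lexLt_upperItin hα0 hβ hu h1 hu.2,
      lowerItin_lexLt_upperItin hα0 hβ h0 hv hv.1, upperItin_lexLe hα0 hβ₀ hv h1 hv.2⟩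

/-- **Validity of the φ-expansion for `βx + α mod 1`.** For `0 ≤ α < 1 < β` and
`k = ⌈α+β⌉`: (i) for every `x ∈ [0,1] ∖ S`, `limₙ φ̄ₙ^{α,β}(i(x)) = x`;
(ii) `{i(x) : x ∈ [0,1] ∖ S} = {x ∈ A^ℕ : u^{α,β} ≺ σⁿx ≺ v^{α,β} for all n ≥ 0}`;
(iii) `u^{α,β} ≼ σⁿu^{α,β} ≺ v^{α,β}` and `u^{α,β} ≺ σⁿv^{α,β} ≼ v^{α,β}` for all `n ≥ 0`. -/
theorem beta_alpha_mod_one_valid (α β : ℝ) (hα0 : 0 ≤ α) (hα1 : α < 1) (hβ : 1 < β) :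
    (∀ x ∈ Set.Icc (0 : ℝ) 1 \ SAB α β,
      Filter.Tendsto (fun n => phiBN α β n (codeAB α β x)) Filter.atTop (nhds x)) ∧
    ({y : ℕ → ℕ | ∃ x ∈ Set.Icc (0 : ℝ) 1 \ SAB α β, y = codeAB α β x} =
      {x : ℕ → ℕ | (∀ i, x i < kAB α β) ∧
        ∀ n, lexLt (uItin α β) (shft^[n] x) ∧ lexLt (shft^[n] x) (vItin α β)}) ∧
    (∀ n, lexLe (uItin α β) (shft^[n] (uItin α β)) ∧
          lexLt (shft^[n] (uItin α β)) (vItin α β) ∧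
          lexLt (uItin α β) (shft^[n] (vItin α β)) ∧
          lexLe (shft^[n] (vItin α β)) (vItin α β)) :=
  beta_alpha_mod_one_valid_general α β hα0 hβ
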